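/- Let N ≥ 1 and m ≥ 1 be integers with N·m ≥ 2, let A_p be a d×d real matrix, and let B_0, B_1, …, B_{Nm−1} be d×d real matrices. Let M ≥ 0, ε ≥ 0 and ρ ≥ 0 be such that ‖A_p‖ ≤ M, ‖A_p^m‖ ≤ ρ, ‖B_i‖ ≤ M and ‖A_p B_i − B_i A_p‖ ≤ ε for every i. Suppose there are indices Nm > j_1 > j_2 > ⋯ > j_m ≥ 0 such that B_{j_k} = A_p and j_k ≥ Nm − kN for each k ∈ {1, …, m}. Then ‖B_{Nm−1} B_{Nm−2} ⋯ B_0‖ ≤ ρ · M^{(N−1)m} + (N−1) · (m(m+1)/2) · M^{Nm−2} · ε. -/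

import Mathlib

/-- The operator norm on `d × d` real matrices induced by the Euclidean norm on `ℝ^d`. -/
noncomputable def opNorm {d : ℕ} (A : Matrix (Fin d) (Fin d) ℝ) : ℝ :=
  ‖Matrix.toEuclideanCLM (𝕜 := ℝ) A‖

/-!
Move the designated copies of `A_p` to the front of the product one at a time, starting with the
rightmost. Commuting `A_p` past `n` factors of norm at most `M` costs at most `n ε M^(n-1)`, so
the `k`-th copy from the left (`k = 0, …, m-1`), at position `p_k` in the list of factors, crosses
`p_k - k` factors and costs at most `(p_k - k) ε M^(Nm-2)`. What is left is `A_p^m` times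
`(N-1)m` factors of norm at most `M`, and the lower bounds on the indices `j` give
`p_k - k ≤ (k+1)(N-1)`, which sums to `(N-1) m(m+1)/2`.
-/

section NormedRing

variable {R : Type*} [NormedRing R] {M ε : ℝ}

theorem natCast_mul_pow_sub_mul_pow {c k r : ℕ} (h : c = 0 ∨ r ≤ k) (j : ℕ) :
    (c : ℝ) * M ^ (k - r) * M ^ j = c * M ^ (k + j - r) := by
  rcases h with rfl | h
  · simp
  · rw [mul_assoc, ← pow_add, Nat.sub_add_comm h]

theorem norm_list_prod_le_pow (h1 : ‖(1 : R)‖ ≤ 1) (hM : 0 ≤ M) :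
    ∀ {L : List R}, (∀ x ∈ L, ‖x‖ ≤ M) → ‖L.prod‖ ≤ M ^ L.length
  | [], _ => by simpa using h1
  | x :: L, hL => by
    rw [List.prod_cons, List.length_cons, pow_succ']
    exact (norm_mul_le _ _).trans <| mul_le_mul (hL x List.mem_cons_self)
      (norm_list_prod_le_pow h1 hM fun y hy ↦ hL y (List.mem_cons_of_mem _ hy)) (norm_nonneg _) hM

theorem norm_mul_list_prod_sub_list_prod_mul_le (h1 : ‖(1 : R)‖ ≤ 1) (hM : 0 ≤ M) (a : R) :
    ∀ {L : List R}, (∀ x ∈ L, ‖x‖ ≤ M) → (∀ x ∈ L, ‖a * x - x * a‖ ≤ ε) →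
      ‖a * L.prod - L.prod * a‖ ≤ L.length * ε * M ^ (L.length - 1)
  | [], _, _ => by simp
  | x :: L, hLM, hLc => by
    have hx : ‖x‖ ≤ M := hLM x List.mem_cons_self
    have hxc : ‖a * x - x * a‖ ≤ ε := hLc x List.mem_cons_self
    have hP := norm_list_prod_le_pow h1 hM fun y hy ↦ hLM y (List.mem_cons_of_mem _ hy)
    have ih := norm_mul_list_prod_sub_list_prod_mul_le h1 hM a
      (fun y hy ↦ hLM y (List.mem_cons_of_mem _ hy)) (fun y hy ↦ hLc y (List.mem_cons_of_mem _ hy))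
    have key : a * (x :: L).prod - (x :: L).prod * a =
        (a * x - x * a) * L.prod + x * (a * L.prod - L.prod * a) := by
      simp only [List.prod_cons]; noncomm_ring
    calc ‖a * (x :: L).prod - (x :: L).prod * a‖
        ≤ ε * M ^ L.length + M * (L.length * ε * M ^ (L.length - 1)) := by
          rw [key]
          refine (norm_add_le _ _).trans (add_le_add ?_ ?_)
          · exact (norm_mul_le _ _).trans
              (mul_le_mul hxc hP (norm_nonneg _) ((norm_nonneg _).trans hxc))
          · exact (norm_mul_le _ _).trans (mul_le_mul hx ih (norm_nonneg _) hM)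
      _ = (x :: L).length * ε * M ^ ((x :: L).length - 1) := by
          have h := natCast_mul_pow_sub_mul_pow (M := M) (r := 1) (Nat.eq_zero_or_pos L.length) 1
          rw [Nat.add_sub_cancel, pow_one] at h
          simp only [List.length_cons, Nat.add_sub_cancel, Nat.cast_succ]
          linear_combination ε * h

theorem List.exists_eq_append_cons_of_getElem?_eq_some {α : Type*} {L : List α} {q : ℕ} {a : α}
    (h : L[q]? = some a) : ∃ S T, L = S ++ a :: T ∧ S.length = q := by
  obtain ⟨hq, rfl⟩ := List.getElem?_eq_some_iff.mp h
  exact ⟨L.take q, L.drop (q + 1), by rw [← List.drop_eq_getElem_cons, List.take_append_drop],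
    List.length_take_of_le hq.le⟩

theorem norm_pow_le_pow_of_norm_le (h1 : ‖(1 : R)‖ ≤ 1) (hM : 0 ≤ M) {a : R} (ha : ‖a‖ ≤ M)
    (m : ℕ) : ‖a ^ m‖ ≤ M ^ m := by
  simpa using norm_list_prod_le_pow h1 hM (L := List.replicate m a)
    fun _ hx ↦ List.eq_of_mem_replicate hx ▸ ha

theorem norm_append_cons_prod_sub_pow_succ_mul_le (h1 : ‖(1 : R)‖ ≤ 1) (hM : 0 ≤ M)
    (hε : 0 ≤ ε) {a : R} (ha : ‖a‖ ≤ M) {S S' T : List R} {m c : ℕ}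
    (hlen : S'.length + m = S.length) (hc : c = 0 ∨ 2 ≤ S.length)
    (hS : ‖S.prod - a ^ m * S'.prod‖ ≤ c * ε * M ^ (S.length - 2))
    (hS'M : ∀ x ∈ S', ‖x‖ ≤ M) (hS'c : ∀ x ∈ S', ‖a * x - x * a‖ ≤ ε)
    (hTM : ∀ x ∈ T, ‖x‖ ≤ M) :
    ‖(S ++ a :: T).prod - a ^ (m + 1) * (S' ++ T).prod‖ ≤
      (c + S'.length : ℕ) * ε * M ^ ((S ++ a :: T).length - 2) := by
  have key : (S ++ a :: T).prod - a ^ (m + 1) * (S' ++ T).prod =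
      ((S.prod - a ^ m * S'.prod) * a - a ^ m * (a * S'.prod - S'.prod * a)) * T.prod := by
    simp only [List.prod_append, List.prod_cons, pow_succ]; noncomm_ring
  have hcomm := norm_mul_list_prod_sub_list_prod_mul_le h1 hM a hS'M hS'c
  have e1 := natCast_mul_pow_sub_mul_pow (M := M) (r := 2) hc (1 + T.length)
  have e2 := natCast_mul_pow_sub_mul_pow (M := M) (r := 1)
    (Nat.eq_zero_or_pos S'.length) (m + T.length)
  rw [show S.length + (1 + T.length) - 2 = (S ++ a :: T).length - 2 by simp; omega] at e1
  rw [show S'.length + (m + T.length) - 1 = (S ++ a :: T).length - 2 by simp; omega] at e2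
  calc ‖(S ++ a :: T).prod - a ^ (m + 1) * (S' ++ T).prod‖
      ≤ (c * ε * M ^ (S.length - 2) * M + M ^ m * (S'.length * ε * M ^ (S'.length - 1)))
          * M ^ T.length := by
        rw [key]
        refine (norm_mul_le _ _).trans
          (mul_le_mul ?_ (norm_list_prod_le_pow h1 hM hTM) (norm_nonneg _) (by positivity))
        refine (norm_sub_le _ _).trans (add_le_add ?_ ?_)
        · exact (norm_mul_le _ _).trans (mul_le_mul hS ha (norm_nonneg _) (by positivity))
        · exact (norm_mul_le _ _).trans (mul_le_mul
            (norm_pow_le_pow_of_norm_le h1 hM ha m) hcomm (norm_nonneg _) (by positivity))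
    _ = (c + S'.length : ℕ) * ε * M ^ ((S ++ a :: T).length - 2) := by
        push_cast
        linear_combination ε * e1 + ε * e2

theorem exists_sublist_norm_list_prod_sub_pow_mul_prod_le (h1 : ‖(1 : R)‖ ≤ 1) (hM : 0 ≤ M)
    {a : R} (ha : ‖a‖ ≤ M) :
    ∀ {m : ℕ} {L : List R} (p : Fin m → ℕ), StrictMono p → (∀ k, L[p k]? = some a) →
      (∀ x ∈ L, ‖x‖ ≤ M) → (∀ x ∈ L, ‖a * x - x * a‖ ≤ ε) →
      ∃ L' : List R, L'.Sublist L ∧ L'.length + m = L.length ∧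
        ‖L.prod - a ^ m * L'.prod‖ ≤ (∑ k, (p k - k) : ℕ) * ε * M ^ (L.length - 2)
  | 0, L, _, _, _, _, _ => ⟨L, List.Sublist.refl L, rfl, by simp⟩
  | m + 1, L, p, hp, hpa, hLM, hLc => by
    obtain ⟨S, T, rfl, hSq⟩ := List.exists_eq_append_cons_of_getElem?_eq_some (hpa (Fin.last m))
    have hlt (k : Fin m) : p k.castSucc < S.length := hSq ▸ hp (Fin.castSucc_lt_last k)
    obtain ⟨S', hS'S, hS'len, hS'⟩ := exists_sublist_norm_list_prod_sub_pow_mul_prod_le h1 hM ha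
      (fun k : Fin m ↦ p k.castSucc) (hp.comp Fin.strictMono_castSucc)
      (fun k ↦ by rw [← hpa k.castSucc, List.getElem?_append_left (hlt k)])
      (fun x hx ↦ hLM x (List.mem_append_left _ hx)) (fun x hx ↦ hLc x (List.mem_append_left _ hx))
    refine ⟨S' ++ T, hS'S.append (List.sublist_cons_self a T), by simp; omega, ?_⟩
    have hc : ∑ k : Fin m, (p k.castSucc - (k : ℕ)) = 0 ∨ 2 ≤ S.length := by
      refine (Nat.eq_zero_or_pos _).imp_right fun hpos ↦ ?_
      obtain ⟨k, -, hk⟩ := Finset.exists_ne_zero_of_sum_ne_zero hpos.ne'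
      have := hlt k
      omega
    have hcost : ∑ k : Fin (m + 1), (p k - k) = ∑ k : Fin m, (p k.castSucc - k) + S'.length := by
      simp only [Fin.sum_univ_castSucc, Fin.val_castSucc, Fin.val_last, ← hSq]
      omega
    rw [hcost]
    exact norm_append_cons_prod_sub_pow_succ_mul_le h1 hM
      ((norm_nonneg _).trans (hLc a (by simp))) ha hS'len hc hS'
      (fun x hx ↦ hLM x (List.mem_append_left _ (hS'S.subset hx)))
      (fun x hx ↦ hLc x (List.mem_append_left _ (hS'S.subset hx)))
      (fun x hx ↦ hLM x (List.mem_append_right _ (List.mem_cons_of_mem _ hx)))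

end NormedRing

theorem List.getElem?_map_reverse_finRange {α : Type*} {n : ℕ} (f : Fin n → α) (i : Fin n) :
    ((List.finRange n).reverse.map f)[n - 1 - i]? = some (f i) := by
  have := i.isLt
  rw [List.map_reverse, List.getElem?_reverse (by simp; omega), List.length_map,
    List.length_finRange, show n - 1 - (n - 1 - i) = i by omega]
  simp

theorem sum_range_natCast_add_one (m : ℕ) :
    ∑ i ∈ Finset.range m, ((i : ℝ) + 1) = m * (m + 1) / 2 := by
  induction m with
  | zero => simp
  | succ m ih => rw [Finset.sum_range_succ, ih]; push_cast; ring

theorem natCast_sum_tsub_le_of_lt_mul {m N : ℕ} (hN : 1 ≤ N) {p : Fin m → ℕ}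
    (hp : ∀ k : Fin m, p k < (k + 1) * N) :
    ((∑ k, (p k - k) : ℕ) : ℝ) ≤ (N - 1) * (m * (m + 1) / 2) := by
  have hle : ∑ k, (p k - k) ≤ ∑ k : Fin m, (N - 1) * (k + 1) :=
    Finset.sum_le_sum fun k _ ↦ by have := hp k; rw [Nat.sub_one_mul, mul_comm]; omega
  calc ((∑ k, (p k - k) : ℕ) : ℝ) ≤ ∑ k : Fin m, ((N : ℝ) - 1) * (k + 1) := by
        exact_mod_cast hle
    _ = (N - 1) * (m * (m + 1) / 2) := by
        rw [← Finset.mul_sum, Fin.sum_univ_eq_sum_range (fun k ↦ (k : ℝ) + 1),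
          sum_range_natCast_add_one]

open scoped Matrix.Norms.L2Operator

theorem opNorm_eq_norm {d : ℕ} (A : Matrix (Fin d) (Fin d) ℝ) : opNorm A = ‖A‖ := rfl

theorem product_norm_bound_with_rearrangement_general {d N m : ℕ} (hN : 1 ≤ N)
    (Ap : Matrix (Fin d) (Fin d) ℝ) (B : Fin (N * m) → Matrix (Fin d) (Fin d) ℝ)
    (M ε ρ : ℝ) (hM : 0 ≤ M) (hε : 0 ≤ ε) (hρ : 0 ≤ ρ)
    (hAp : opNorm Ap ≤ M)
    (hApm : opNorm (Ap ^ m) ≤ ρ)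
    (hB : ∀ i, opNorm (B i) ≤ M)
    (hcomm : ∀ i, opNorm (Ap * B i - B i * Ap) ≤ ε)
    (j : Fin m → Fin (N * m)) (hj : StrictAnti j)
    (hjB : ∀ k, B (j k) = Ap)
    (hjge : ∀ k : Fin m, N * m - (k.val + 1) * N ≤ (j k).val) :
    opNorm (((List.finRange (N * m)).reverse.map B).prod) ≤
      ρ * M ^ ((N - 1) * m) +
        ((N : ℝ) - 1) * ((m : ℝ) * ((m : ℝ) + 1) / 2) * M ^ (N * m - 2) * ε := by
  simp only [opNorm_eq_norm] at *
  set L := (List.finRange (N * m)).reverse.map B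
  have h1 : ‖(1 : Matrix (Fin d) (Fin d) ℝ)‖ ≤ 1 := by
    rw [Matrix.cstar_norm_def, map_one]; exact ContinuousLinearMap.norm_id_le
  have hp : StrictMono fun k ↦ N * m - 1 - (j k : ℕ) := fun k l hkl ↦ by
    have := hj hkl; have := (j k).isLt; simp only; omega
  obtain ⟨L', hL'L, hL'len, hdiff⟩ := exists_sublist_norm_list_prod_sub_pow_mul_prod_le
    (ε := ε) (L := L) h1 hM hAp _ hp (fun k ↦ by rw [List.getElem?_map_reverse_finRange, hjB k])
    (by simpa [L] using hB) (by simpa [L] using hcomm)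
  have hLlen : L.length = N * m := by simp [L]
  have hL' : ‖L'.prod‖ ≤ M ^ ((N - 1) * m) := by
    rw [Nat.sub_one_mul, ← hLlen, ← hL'len, Nat.add_sub_cancel]
    refine norm_list_prod_le_pow h1 hM fun x hx ↦ ?_
    obtain ⟨i, -, rfl⟩ := List.mem_map.mp (hL'L.subset hx)
    exact hB i
  have hcost := natCast_sum_tsub_le_of_lt_mul hN (p := fun k ↦ N * m - 1 - (j k : ℕ))
    fun k ↦ by have := hjge k; have := (j k).isLt; omega
  rw [hLlen] at hdiff
  calc ‖L.prod‖ = ‖Ap ^ m * L'.prod + (L.prod - Ap ^ m * L'.prod)‖ := by rw [add_sub_cancel]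
    _ ≤ ‖Ap ^ m‖ * ‖L'.prod‖ + ‖L.prod - Ap ^ m * L'.prod‖ :=
        (norm_add_le _ _).trans (add_le_add (norm_mul_le _ _) le_rfl)
    _ ≤ ρ * M ^ ((N - 1) * m) + (N - 1) * (m * (m + 1) / 2) * ε * M ^ (N * m - 2) := by
        gcongr
        exact hdiff.trans (by gcongr)
    _ = _ := by ring

theorem product_norm_bound_with_rearrangement {d N m : ℕ} (hN : 1 ≤ N) (hm : 1 ≤ m)
    (hNm : 2 ≤ N * m)
    (Ap : Matrix (Fin d) (Fin d) ℝ) (B : Fin (N * m) → Matrix (Fin d) (Fin d) ℝ)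
    (M ε ρ : ℝ) (hM : 0 ≤ M) (hε : 0 ≤ ε) (hρ : 0 ≤ ρ)
    (hAp : opNorm Ap ≤ M)
    (hApm : opNorm (Ap ^ m) ≤ ρ)
    (hB : ∀ i, opNorm (B i) ≤ M)
    (hcomm : ∀ i, opNorm (Ap * B i - B i * Ap) ≤ ε)
    (j : Fin m → Fin (N * m)) (hj : StrictAnti j)
    (hjB : ∀ k, B (j k) = Ap)
    (hjge : ∀ k : Fin m, N * m - (k.val + 1) * N ≤ (j k).val) :
    opNorm (((List.finRange (N * m)).reverse.map B).prod) ≤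
      ρ * M ^ ((N - 1) * m) +
        ((N : ℝ) - 1) * ((m : ℝ) * ((m : ℝ) + 1) / 2) * M ^ (N * m - 2) * ε :=
  product_norm_bound_with_rearrangement_general hN Ap B M ε ρ hM hε hρ hAp hApm hB hcomm j hj hjB
    hjge
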